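/- Let X be a quandle and Y a hierarchical quandle over X. Then the operation (x1, y1) ∘ (x2, y2) = (x1 * x2, y1 *_{x1}^{x2} y2) makes X × Y a quandle. -/

import Mathlib

/-! Each quandle axiom for `X × Y` splits into the axiom for `X` on first coordinates and the
corresponding hierarchical axiom on second coordinates. Right translation by `(a, b)` is the
shear `(x, y) ↦ (x * a, y *_x^a b)`, bijective because `x ↦ x * a` is and each
`y ↦ y *_x^a b` is. -/

/-- A hierarchical quandle over a quandle `(X, qop)`:
`op x1 x2 y1 y2` denotes `y1 *_{x1}^{x2} y2`. -/
structure HierarchicalQuandle {X : Type*} (qop : X → X → X) (Y : Type*) where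
  op : X → X → Y → Y → Y
  idem : ∀ x y, op x x y y = y
  rightBij : ∀ x1 x2 a, Function.Bijective fun y => op x1 x2 y a
  distrib : ∀ x1 x2 x3 y1 y2 y3,
    op (qop x1 x2) x3 (op x1 x2 y1 y2) y3 =
      op (qop x1 x3) (qop x2 x3) (op x1 x3 y1 y3) (op x2 x3 y2 y3)

theorem Function.Bijective.prod_shear {α β γ δ : Type*} {f : α → β} {g : α → γ → δ}
    (hf : Function.Bijective f) (hg : ∀ a, Function.Bijective (g a)) :
    Function.Bijective fun p : α × γ => (f p.1, g p.1 p.2) :=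
  ((Equiv.ofBijective f hf).prodShear fun a => Equiv.ofBijective _ (hg a)).bijective

namespace HierarchicalQuandle

variable {X Y : Type*} {qop : X → X → X} (H : HierarchicalQuandle qop Y)

def prodOp (p q : X × Y) : X × Y :=
  (qop p.1 q.1, H.op p.1 q.1 p.2 q.2)

theorem prodOp_self (qidem : ∀ x, qop x x = x) (p : X × Y) : H.prodOp p p = p :=
  Prod.ext (qidem p.1) (H.idem p.1 p.2)

theorem bijective_prodOp_left (qbij : ∀ a b : X, ∃! x, qop x a = b) (a : X × Y) :
    Function.Bijective fun p => H.prodOp p a :=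
  ((Function.bijective_iff_existsUnique _).2 (qbij a.1)).prod_shear
    fun x => H.rightBij x a.1 a.2

theorem prodOp_prodOp
    (qdistrib : ∀ x1 x2 x3, qop (qop x1 x2) x3 = qop (qop x1 x3) (qop x2 x3))
    (p q r : X × Y) :
    H.prodOp (H.prodOp p q) r = H.prodOp (H.prodOp p r) (H.prodOp q r) :=
  Prod.ext (qdistrib p.1 q.1 r.1) (H.distrib p.1 q.1 r.1 p.2 q.2 r.2)

end HierarchicalQuandle

theorem prod_quandle {X Y : Type*} (qop : X → X → X)
    (qidem : ∀ x, qop x x = x)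
    (qbij : ∀ a b : X, ∃! x, qop x a = b)
    (qdistrib : ∀ x1 x2 x3, qop (qop x1 x2) x3 = qop (qop x1 x3) (qop x2 x3))
    (H : HierarchicalQuandle qop Y) :
    let circ : X × Y → X × Y → X × Y :=
      fun p q => (qop p.1 q.1, H.op p.1 q.1 p.2 q.2)
    (∀ p : X × Y, circ p p = p) ∧
    (∀ a b : X × Y, ∃! p, circ p a = b) ∧
    (∀ p q r : X × Y, circ (circ p q) r = circ (circ p r) (circ q r)) :=
  ⟨H.prodOp_self qidem,
    fun a => (Function.bijective_iff_existsUnique _).1 (H.bijective_prodOp_left qbij a),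
    H.prodOp_prodOp qdistrib⟩
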